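/- For k ≥ 2 and u > 0, (2π)^{−k/2} ∫_{B_k(√u)} (∂²/∂z₁²) exp(−|z|²/2) dz = −(2u/k) · u^{k/2−1} exp(−u/2) / (2^{k/2} Γ(k/2)), where B_k(√u) is the ball of radius √u in ℝ^k. -/

import Mathlib

open MeasureTheory Real

private lemma myDeriv2 (c : ℝ) (s : ℝ) :
    iteratedDeriv 2 (fun t => Real.exp (-(t ^ 2 + c) / 2)) s
      = (s ^ 2 - 1) * Real.exp (-(s ^ 2 + c) / 2) := by
  have h1 : ∀ t : ℝ, HasDerivAt (fun t => Real.exp (-(t ^ 2 + c) / 2))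
      (-t * Real.exp (-(t ^ 2 + c) / 2)) t := by
    intro t
    have : HasDerivAt (fun t : ℝ => -(t ^ 2 + c) / 2) (-t) t := by
      have := ((hasDerivAt_pow 2 t).add_const c).neg.div_const 2
      exact this.congr_deriv (by norm_num; ring)
    simpa [mul_comm] using this.exp
  have hd1 : deriv (fun t => Real.exp (-(t ^ 2 + c) / 2))
      = fun t => -t * Real.exp (-(t ^ 2 + c) / 2) := funext fun t => (h1 t).deriv
  have h2 : HasDerivAt (fun t => -t * Real.exp (-(t ^ 2 + c) / 2))
      ((s ^ 2 - 1) * Real.exp (-(s ^ 2 + c) / 2)) s := by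
    have := ((hasDerivAt_id s).neg).mul (h1 s)
    refine this.congr_deriv ?_; simp only [Pi.neg_apply, id]; ring
  rw [iteratedDeriv_succ, iteratedDeriv_one, hd1]
  exact h2.deriv

private lemma mySumUpdate {k : ℕ} (z : Fin k → ℝ) (j : Fin k) (t : ℝ) :
    ∑ i, (Function.update z j t i) ^ 2 = t ^ 2 + ((∑ i, z i ^ 2) - z j ^ 2) := by
  have h1 : ∀ w : Fin k → ℝ, ∑ i, w i ^ 2
      = w j ^ 2 + ∑ i ∈ Finset.univ.erase j, w i ^ 2 :=
    fun w => (Finset.add_sum_erase _ _ (Finset.mem_univ j)).symm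
  rw [h1, h1 z, Function.update_self]
  have : ∑ i ∈ Finset.univ.erase j, (Function.update z j t i) ^ 2
      = ∑ i ∈ Finset.univ.erase j, z i ^ 2 := by
    refine Finset.sum_congr rfl fun i hi => ?_
    rw [Function.update_of_ne (Finset.ne_of_mem_erase hi)]
  rw [this]; ring

private lemma myIntegrandEq {k : ℕ} (j : Fin k) (z : Fin k → ℝ) :
    iteratedDeriv 2 (fun t => Real.exp (-(∑ i, Function.update z j t i ^ 2) / 2)) (z j)
      = ((z j) ^ 2 - 1) * Real.exp (-(∑ i, z i ^ 2) / 2) := by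
  have hf : (fun t => Real.exp (-(∑ i, Function.update z j t i ^ 2) / 2))
      = fun t => Real.exp (-(t ^ 2 + ((∑ i, z i ^ 2) - z j ^ 2)) / 2) := by
    funext t; rw [mySumUpdate]
  rw [hf, myDeriv2]
  congr 2
  ring

private lemma myQCont {k : ℕ} : Continuous (fun z : Fin k → ℝ => ∑ i, z i ^ 2) :=
  continuous_finset_sum _ fun i _ => (continuous_apply i).pow 2

private lemma mySCompact {k : ℕ} {u : ℝ} :
    IsCompact {z : Fin k → ℝ | ∑ i, z i ^ 2 ≤ u} := by
  refine Metric.isCompact_of_isClosed_isBounded (isClosed_le myQCont continuous_const) ?_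
  refine (Metric.isBounded_iff_subset_closedBall 0).2 ⟨Real.sqrt u, fun z hz => ?_⟩
  simp only [Set.mem_setOf_eq] at hz
  rw [Metric.mem_closedBall, dist_zero_right]
  refine (pi_norm_le_iff_of_nonneg (Real.sqrt_nonneg u)).2 fun i => ?_
  rw [Real.norm_eq_abs, ← Real.sqrt_sq_eq_abs]
  refine Real.sqrt_le_sqrt (le_trans ?_ hz)
  exact Finset.single_le_sum (fun m _ => sq_nonneg (z m)) (Finset.mem_univ i)

private lemma mySwapInt {k : ℕ} {u : ℝ} (i j : Fin k) :
    ∫ z in {z : Fin k → ℝ | ∑ i, z i ^ 2 ≤ u}, ((z j) ^ 2 - 1) * Real.exp (-(∑ i, z i ^ 2) / 2)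
    = ∫ z in {z : Fin k → ℝ | ∑ i, z i ^ 2 ≤ u},
        ((z i) ^ 2 - 1) * Real.exp (-(∑ i, z i ^ 2) / 2) := by
  classical
  set σ := Equiv.swap i j with hσ
  set T := MeasurableEquiv.arrowCongr' σ (MeasurableEquiv.refl ℝ) with hT
  have hTm : MeasurePreserving T :=
    MeasureTheory.volume_preserving_arrowCongr' σ _ (MeasurePreserving.id _)
  have hTapp : ∀ (z : Fin k → ℝ) (m : Fin k), T z m = z (σ m) := by
    intro z m
    simp [hT, MeasurableEquiv.arrowCongr', Equiv.arrowCongr', Equiv.arrowCongr, hσ]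
  have hsum : ∀ z : Fin k → ℝ, ∑ m, (T z m) ^ 2 = ∑ m, z m ^ 2 := by
    intro z
    simp_rw [hTapp]
    exact Equiv.sum_comp σ (fun m => z m ^ 2)
  have hpre : T ⁻¹' {z : Fin k → ℝ | ∑ i, z i ^ 2 ≤ u}
      = {z : Fin k → ℝ | ∑ i, z i ^ 2 ≤ u} := by
    ext z; simp only [Set.mem_preimage, Set.mem_setOf_eq, hsum z]
  rw [← hTm.setIntegral_preimage_emb (MeasurableEquiv.measurableEmbedding T)
    (fun z => ((z i) ^ 2 - 1) * Real.exp (-(∑ i, z i ^ 2) / 2)), hpre]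
  have hSm : MeasurableSet {z : Fin k → ℝ | ∑ i, z i ^ 2 ≤ u} :=
    (isClosed_le myQCont continuous_const).measurableSet
  refine setIntegral_congr_fun hSm fun z _ => ?_
  simp only [hTapp, hσ, Equiv.swap_apply_left]
  rw [Equiv.sum_comp (Equiv.swap i j) fun m => z m ^ 2]

private lemma mySymmStep {k : ℕ} {u : ℝ} (j : Fin k) :
    (k : ℝ) * ∫ z in {z : Fin k → ℝ | ∑ i, z i ^ 2 ≤ u},
        ((z j) ^ 2 - 1) * Real.exp (-(∑ i, z i ^ 2) / 2)
      = ∫ z in {z : Fin k → ℝ | ∑ i, z i ^ 2 ≤ u},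
          ((∑ i, z i ^ 2) - k) * Real.exp (-(∑ i, z i ^ 2) / 2) := by
  have hInt : ∀ i : Fin k, IntegrableOn
      (fun z : Fin k → ℝ => ((z i) ^ 2 - 1) * Real.exp (-(∑ m, z m ^ 2) / 2))
      {z : Fin k → ℝ | ∑ i, z i ^ 2 ≤ u} volume := by
    intro i
    have hc : Continuous fun z : Fin k → ℝ =>
        ((z i) ^ 2 - 1) * Real.exp (-(∑ m, z m ^ 2) / 2) :=
      (((continuous_apply i).pow 2).sub continuous_const).mul
        ((myQCont.neg.div_const 2).rexp)
    exact hc.continuousOn.integrableOn_compact mySCompact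
  have h1 : ∫ z in {z : Fin k → ℝ | ∑ i, z i ^ 2 ≤ u},
        ((∑ i, z i ^ 2) - k) * Real.exp (-(∑ i, z i ^ 2) / 2)
      = ∑ i : Fin k, ∫ z in {z : Fin k → ℝ | ∑ i, z i ^ 2 ≤ u},
          ((z i) ^ 2 - 1) * Real.exp (-(∑ m, z m ^ 2) / 2) := by
    rw [← integral_finset_sum _ (fun i _ => hInt i)]
    refine integral_congr_ae (Filter.Eventually.of_forall fun z => ?_)
    show (∑ i, z i ^ 2 - (k:ℝ)) * Real.exp (-(∑ i, z i ^ 2) / 2)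
      = ∑ i, (z i ^ 2 - 1) * Real.exp (-(∑ m, z m ^ 2) / 2)
    rw [← Finset.sum_mul]
    congr 1
    rw [Finset.sum_sub_distrib, Finset.sum_const, Finset.card_univ, Fintype.card_fin,
      nsmul_eq_mul, mul_one]
  rw [h1]
  have h2 : ∀ i : Fin k, ∫ z in {z : Fin k → ℝ | ∑ i, z i ^ 2 ≤ u},
      ((z i) ^ 2 - 1) * Real.exp (-(∑ m, z m ^ 2) / 2)
      = ∫ z in {z : Fin k → ℝ | ∑ i, z i ^ 2 ≤ u},
        ((z j) ^ 2 - 1) * Real.exp (-(∑ m, z m ^ 2) / 2) := fun i => (mySwapInt i j).symm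
  rw [Finset.sum_congr rfl fun i _ => h2 i, Finset.sum_const, Finset.card_univ,
    Fintype.card_fin, nsmul_eq_mul]

private lemma myOneD (k : ℕ) (hk : 2 ≤ k) (u : ℝ) (hu : 0 < u) :
    ∫ y in (0:ℝ)..(Real.sqrt u), y ^ (k - 1) * ((y ^ 2 - k) * Real.exp (-(y ^ 2) / 2))
      = -(Real.sqrt u ^ k * Real.exp (-u / 2)) := by
  obtain ⟨m, rfl⟩ : ∃ m, k = m + 2 := ⟨k - 2, by omega⟩
  have hF : ∀ y : ℝ, HasDerivAt (fun y : ℝ => -(y ^ (m + 2) * Real.exp (-(y ^ 2) / 2)))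
      (y ^ (m + 1) * ((y ^ 2 - ((m : ℝ) + 2)) * Real.exp (-(y ^ 2) / 2))) y := by
    intro y
    have he : HasDerivAt (fun y : ℝ => Real.exp (-(y ^ 2) / 2))
        (-y * Real.exp (-(y ^ 2) / 2)) y := by
      have h0 : HasDerivAt (fun y : ℝ => -(y ^ 2) / 2) (-y) y := by
        have := ((hasDerivAt_pow 2 y).neg).div_const 2
        exact this.congr_deriv (by norm_num; ring)
      simpa [mul_comm] using h0.exp
    have := ((hasDerivAt_pow (m + 2) y).mul he).neg
    refine this.congr_deriv ?_
    have h21 : m + 2 - 1 = m + 1 := rfl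
    rw [h21]
    push_cast
    ring
  rw [show m + 2 - 1 = m + 1 from rfl]
  push_cast
  rw [intervalIntegral.integral_eq_sub_of_hasDerivAt (fun y _ => hF y) ?_]
  · rw [Real.sq_sqrt hu.le]
    norm_num
  · apply Continuous.intervalIntegrable
    continuity

private lemma myRadial (k : ℕ) (hk : 2 ≤ k) (u : ℝ) (hu : 0 < u) :
    ∫ z in {z : Fin k → ℝ | ∑ i, z i ^ 2 ≤ u},
        ((∑ i, z i ^ 2) - k) * Real.exp (-(∑ i, z i ^ 2) / 2)
      = (k : ℝ) * (volume (Metric.ball (0 : EuclideanSpace ℝ (Fin k)) 1)).toReal *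
          (-(Real.sqrt u ^ k * Real.exp (-u / 2))) := by
  classical
  have hvol := EuclideanSpace.volume_preserving_symm_measurableEquiv_toLp (Fin k)
  set e := (MeasurableEquiv.toLp 2 (Fin k → ℝ)).symm with he
  set g0 : ℝ → ℝ := fun r => (r ^ 2 - k) * Real.exp (-(r ^ 2) / 2) with hg0
  have hnorm : ∀ x : EuclideanSpace ℝ (Fin k), ‖x‖ = Real.sqrt (∑ i, x i ^ 2) := by
    intro x
    rw [EuclideanSpace.norm_eq]
    simp [sq_abs]
  have hnormsq : ∀ x : EuclideanSpace ℝ (Fin k), ‖x‖ ^ 2 = ∑ i, x i ^ 2 := by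
    intro x
    rw [hnorm, Real.sq_sqrt (Finset.sum_nonneg fun i _ => sq_nonneg _)]
  have hesum : ∀ x : EuclideanSpace ℝ (Fin k), ∑ i, (e x) i ^ 2 = ∑ i, x i ^ 2 := fun x => rfl
  have hpre : e ⁻¹' {z : Fin k → ℝ | ∑ i, z i ^ 2 ≤ u}
      = Metric.closedBall (0 : EuclideanSpace ℝ (Fin k)) (Real.sqrt u) := by
    ext x
    rw [Set.mem_preimage, Metric.mem_closedBall, dist_zero_right, Set.mem_setOf_eq, hesum,
      hnorm, Real.sqrt_le_sqrt_iff hu.le]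
  have step1 : ∫ z in {z : Fin k → ℝ | ∑ i, z i ^ 2 ≤ u},
        ((∑ i, z i ^ 2) - k) * Real.exp (-(∑ i, z i ^ 2) / 2)
      = ∫ x in Metric.closedBall (0 : EuclideanSpace ℝ (Fin k)) (Real.sqrt u), g0 ‖x‖ := by
    rw [← hvol.setIntegral_preimage_emb (MeasurableEquiv.measurableEmbedding e)
      (fun z => ((∑ i, z i ^ 2) - k) * Real.exp (-(∑ i, z i ^ 2) / 2)), hpre]
    refine setIntegral_congr_fun measurableSet_closedBall fun x _ => ?_
    rw [hesum, hg0]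
    simp only [hnormsq]
  haveI : Nontrivial (EuclideanSpace ℝ (Fin k)) := by
    refine ⟨0, EuclideanSpace.single ⟨0, by omega⟩ 1, fun h => ?_⟩
    have := congrArg (fun v => v ⟨0, by omega⟩) h.symm
    simp [EuclideanSpace.single_apply] at this
  have step2 : ∫ x in Metric.closedBall (0 : EuclideanSpace ℝ (Fin k)) (Real.sqrt u), g0 ‖x‖
      = ∫ x : EuclideanSpace ℝ (Fin k), ((Set.Iic (Real.sqrt u)).indicator g0) ‖x‖ := by
    rw [← integral_indicator measurableSet_closedBall]
    congr 1
    funext x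
    by_cases hx : x ∈ Metric.closedBall (0 : EuclideanSpace ℝ (Fin k)) (Real.sqrt u)
    · rw [Set.indicator_of_mem hx, Set.indicator_of_mem]
      rwa [Set.mem_Iic, ← dist_zero_right]
    · rw [Set.indicator_of_notMem hx, Set.indicator_of_notMem]
      rw [Set.mem_Iic, ← dist_zero_right]
      exact fun h => hx h
  have step3 := integral_fun_norm_addHaar (volume : Measure (EuclideanSpace ℝ (Fin k)))
    ((Set.Iic (Real.sqrt u)).indicator g0)
  rw [step1, step2, step3, finrank_euclideanSpace, Fintype.card_fin]
  have step4 : ∫ y in Set.Ioi (0:ℝ), y ^ (k - 1) • ((Set.Iic (Real.sqrt u)).indicator g0) y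
      = ∫ y in (0:ℝ)..(Real.sqrt u), y ^ (k - 1) * ((y ^ 2 - k) * Real.exp (-(y ^ 2) / 2)) := by
    have : ∀ y : ℝ, y ^ (k - 1) • ((Set.Iic (Real.sqrt u)).indicator g0) y
        = (Set.Iic (Real.sqrt u)).indicator (fun y => y ^ (k - 1) * g0 y) y := by
      intro y
      by_cases hy : y ∈ Set.Iic (Real.sqrt u) <;>
        simp [Set.indicator_of_mem, Set.indicator_of_notMem, hy]
    simp_rw [this]
    rw [setIntegral_indicator measurableSet_Iic, Set.Ioi_inter_Iic,
      intervalIntegral.integral_of_le (Real.sqrt_nonneg u)]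
  rw [step4, myOneD k hk u hu]
  simp only [nsmul_eq_mul, smul_eq_mul, Measure.real]
  ring

theorem stmt7 (k : ℕ) (hk : 2 ≤ k) (u : ℝ) (hu : 0 < u) :
    (2 * Real.pi) ^ (-(k : ℝ) / 2) *
        ∫ z in {z : Fin k → ℝ | ∑ i, z i ^ 2 ≤ u},
          iteratedDeriv 2
            (fun t => Real.exp (-(∑ i, Function.update z ⟨0, by omega⟩ t i ^ 2) / 2))
            (z ⟨0, by omega⟩) =
      -(2 * u / k) *
        (u ^ ((k : ℝ) / 2 - 1) * Real.exp (-u / 2) /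
          (2 ^ ((k : ℝ) / 2) * Real.Gamma ((k : ℝ) / 2))) := by
  have hkR : (0:ℝ) < k := by positivity
  set j : Fin k := ⟨0, by omega⟩ with hj
  have hrw : ∫ z in {z : Fin k → ℝ | ∑ i, z i ^ 2 ≤ u},
          iteratedDeriv 2
            (fun t => Real.exp (-(∑ i, Function.update z j t i ^ 2) / 2)) (z j)
      = ∫ z in {z : Fin k → ℝ | ∑ i, z i ^ 2 ≤ u},
          ((z j) ^ 2 - 1) * Real.exp (-(∑ i, z i ^ 2) / 2) :=
    integral_congr_ae (Filter.Eventually.of_forall fun z => myIntegrandEq j z)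
  rw [hrw]
  have hkey : ∫ z in {z : Fin k → ℝ | ∑ i, z i ^ 2 ≤ u},
      ((z j) ^ 2 - 1) * Real.exp (-(∑ i, z i ^ 2) / 2)
      = (volume (Metric.ball (0 : EuclideanSpace ℝ (Fin k)) 1)).toReal *
          (-(Real.sqrt u ^ k * Real.exp (-u / 2))) := by
    have h := (mySymmStep (u := u) j).trans (myRadial k hk u hu)
    apply mul_left_cancel₀ (ne_of_gt hkR)
    rw [h]; ring
  rw [hkey]
  haveI : Nonempty (Fin k) := ⟨j⟩
  -- volume of the unit ball
  have hΓpos : 0 < Real.Gamma ((k:ℝ)/2) := Real.Gamma_pos_of_pos (by positivity)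
  have hΓ1 : Real.Gamma ((k:ℝ)/2 + 1) = ((k:ℝ)/2) * Real.Gamma ((k:ℝ)/2) :=
    Real.Gamma_add_one (by positivity)
  have hΓ1pos : 0 < Real.Gamma ((k:ℝ)/2 + 1) := by rw [hΓ1]; positivity
  have hV : (volume (Metric.ball (0 : EuclideanSpace ℝ (Fin k)) 1)).toReal
      = Real.sqrt π ^ k / Real.Gamma ((k:ℝ)/2 + 1) := by
    rw [EuclideanSpace.volume_ball, Fintype.card_fin, ENNReal.ofReal_one, one_pow, one_mul,
      ENNReal.toReal_ofReal]
    positivity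
  rw [hV]
  have hsqrtu : Real.sqrt u ^ k = u ^ ((k:ℝ)/2) := by
    rw [Real.sqrt_eq_rpow, ← Real.rpow_natCast (u ^ ((1:ℝ)/2)) k, ← Real.rpow_mul hu.le]
    congr 1; ring
  have hsqrtpi : Real.sqrt π ^ k = π ^ ((k:ℝ)/2) := by
    rw [Real.sqrt_eq_rpow, ← Real.rpow_natCast (π ^ ((1:ℝ)/2)) k, ← Real.rpow_mul pi_pos.le]
    congr 1; ring
  have h2pi : (2 * π) ^ (-(k:ℝ)/2) = (2 ^ ((k:ℝ)/2))⁻¹ * (π ^ ((k:ℝ)/2))⁻¹ := by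
    rw [show -(k:ℝ)/2 = -((k:ℝ)/2) by ring, Real.rpow_neg (by positivity), Real.mul_rpow
      (by norm_num) pi_pos.le, mul_inv]
  have huk : u ^ ((k:ℝ)/2) = u * u ^ ((k:ℝ)/2 - 1) := by
    nth_rewrite 1 [show ((k:ℝ)/2) = 1 + ((k:ℝ)/2 - 1) by ring]
    rw [Real.rpow_add hu, Real.rpow_one]
  have h2pos : (0:ℝ) < 2 ^ ((k:ℝ)/2) := Real.rpow_pos_of_pos (by norm_num) _
  have hppos : (0:ℝ) < π ^ ((k:ℝ)/2) := Real.rpow_pos_of_pos pi_pos _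
  rw [h2pi, hsqrtu, hsqrtpi, hΓ1, huk]
  field_simp
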